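/- Let σ > 0, c ≥ 0, and let τ : ℝ^M → ℝ satisfy τ(p) ≥ -c - σ|p| for all p. For k ∈ ℕ, k ≥ 1, define τ_k(p) := τ(p) + |p|/k, and let τ̂_k and τ̂ denote the σ-Yosida transforms of τ_k and τ respectively. Then for every p ∈ ℝ^M, τ̂_k(p) decreases monotonically to τ̂(p) as k → ∞ (in particular τ̂(p) ≤ τ̂_k(p) for all k, and τ̂_k(p) → τ̂(p)). -/
import Mathlib


open Set Filter Topology

/-- For `τ_k(p) := τ(p) + |p|/k`, the σ-Yosida transforms `τ̂_k` decrease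
monotonically to the σ-Yosida transform `τ̂` of `τ`. -/
theorem yosida_of_perturbation_decreases_to_yosida {M : ℕ} (σ c : ℝ)
    (hσ : 0 < σ) (hc : 0 ≤ c)
    (τ : EuclideanSpace ℝ (Fin M) → ℝ)
    (hτ : ∀ p, -c - σ * ‖p‖ ≤ τ p)
    (yos : (EuclideanSpace ℝ (Fin M) → ℝ) → EuclideanSpace ℝ (Fin M) → ℝ)
    (hyos : ∀ f p, yos f p = sInf (Set.range fun q => f q + σ * ‖p - q‖))
    (τk : ℕ → EuclideanSpace ℝ (Fin M) → ℝ)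
    (hτk : ∀ k p, τk k p = τ p + ‖p‖ / (k : ℝ)) :
    ∀ p : EuclideanSpace ℝ (Fin M),
      (∀ k : ℕ, 1 ≤ k → yos τ p ≤ yos (τk k) p) ∧
      (∀ k j : ℕ, 1 ≤ k → k ≤ j → yos (τk j) p ≤ yos (τk k) p) ∧
      Tendsto (fun k : ℕ => yos (τk k) p) atTop (𝓝 (yos τ p)) := by
  intro p
  -- pointwise lower bound
  have hlb : ∀ q : EuclideanSpace ℝ (Fin M),
      -c - σ * ‖p‖ ≤ τ q + σ * ‖p - q‖ := by
    intro q
    have h1 := hτ q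
    have h2 : ‖q‖ - ‖p‖ ≤ ‖p - q‖ := by
      calc ‖q‖ - ‖p‖ ≤ ‖q - p‖ := norm_sub_norm_le q p
        _ = ‖p - q‖ := norm_sub_rev q p
    nlinarith [norm_nonneg q, norm_nonneg p]
  have hbdd : ∀ f : EuclideanSpace ℝ (Fin M) → ℝ,
      (∀ q, τ q ≤ f q) →
      BddBelow (Set.range fun q => f q + σ * ‖p - q‖) := by
    intro f hf
    refine ⟨-c - σ * ‖p‖, ?_⟩
    rintro x ⟨q, rfl⟩
    show -c - σ * ‖p‖ ≤ f q + σ * ‖p - q‖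
    have := hlb q
    have := hf q
    linarith
  have hτleτk : ∀ k q, τ q ≤ τk k q := by
    intro k q
    rw [hτk]
    have : 0 ≤ ‖q‖ / (k : ℝ) := by positivity
    linarith
  have hmono : ∀ k j : ℕ, 1 ≤ k → k ≤ j → ∀ q, τk j q ≤ τk k q := by
    intro k j hk1 hkj q
    rw [hτk, hτk]
    have : ‖q‖ / (j : ℝ) ≤ ‖q‖ / (k : ℝ) := by
      apply div_le_div_of_nonneg_left (norm_nonneg q)
      · exact_mod_cast hk1
      · exact_mod_cast hkj
    linarith
  -- general comparison of inf over range
  have hinfle : ∀ f g : EuclideanSpace ℝ (Fin M) → ℝ, (∀ q, τ q ≤ f q) →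
      (∀ q, f q ≤ g q) → yos f p ≤ yos g p := by
    intro f g hf hfg
    rw [hyos, hyos]
    refine le_csInf ⟨g p + σ * ‖p - p‖, ⟨p, rfl⟩⟩ ?_
    rintro x ⟨q, rfl⟩
    refine le_trans (csInf_le (hbdd f hf) ⟨q, rfl⟩) ?_
    show f q + σ * ‖p - q‖ ≤ g q + σ * ‖p - q‖
    have := hfg q
    linarith
  refine ⟨?_, ?_, ?_⟩
  · intro k _
    exact hinfle τ (τk k) (fun q => le_refl _) (hτleτk k)
  · intro k j hk1 hkj
    exact hinfle (τk j) (τk k) (hτleτk j) (hmono k j hk1 hkj)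
  · -- convergence
    have hge : ∀ k : ℕ, yos τ p ≤ yos (τk k) p := fun k =>
      hinfle τ (τk k) (fun q => le_refl _) (hτleτk k)
    rw [Metric.tendsto_atTop]
    intro ε hε
    -- choose q near the infimum
    have hne : (Set.range fun q => τ q + σ * ‖p - q‖).Nonempty := ⟨_, ⟨p, rfl⟩⟩
    have hlt : sInf (Set.range fun q => τ q + σ * ‖p - q‖)
        < yos τ p + ε / 2 := by
      rw [hyos]; linarith [hε]
    obtain ⟨x, hx, hxlt⟩ := exists_lt_of_csInf_lt hne hlt
    obtain ⟨q, rfl⟩ := hx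
    simp only at hxlt
    obtain ⟨N, hN⟩ := exists_nat_gt (‖q‖ / (ε / 2))
    refine ⟨max N 1, fun k hk => ?_⟩
    have hk1 : 1 ≤ k := le_trans (le_max_right N 1) hk
    have hkN : (N : ℝ) ≤ k := by exact_mod_cast le_trans (le_max_left N 1) hk
    have hkpos : (0 : ℝ) < k := by exact_mod_cast hk1
    have hqk : ‖q‖ / (k : ℝ) < ε / 2 := by
      rw [div_lt_iff₀ hkpos]
      have hNpos : (0 : ℝ) < N := lt_of_le_of_lt (by positivity) hN
      have : ‖q‖ < ε / 2 * N := by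
        rw [div_lt_iff₀ (by linarith : (0:ℝ) < ε / 2)] at hN
        linarith
      nlinarith
    have hub : yos (τk k) p ≤ τ q + ‖q‖ / (k : ℝ) + σ * ‖p - q‖ := by
      rw [hyos]
      have : τk k q + σ * ‖p - q‖ = τ q + ‖q‖ / (k : ℝ) + σ * ‖p - q‖ := by
        rw [hτk]
      exact this ▸ csInf_le (hbdd (τk k) (hτleτk k)) ⟨q, rfl⟩
    have hge' := hge k
    rw [Real.dist_eq, abs_lt]
    constructor <;> linarith
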